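/- The following two conditions are equivalent (Lemma 4 of the paper, defining feeble distinction): (1) for all x, y ∈ M, if (x,y) ∈ J, I⁺(x) = I⁺(y), and I⁻(x) = I⁻(y), then x = y; (2) for all x, y ∈ M, if (x,y) ∈ J and (y,x) ∈ D⁺, then x = y. -/

import Mathlib

open Set Topology

/-- The chronological future of `x`: `I⁺(x) = {y | (x,y) ∈ I}`. -/
def chronFuture {M : Type*} (I : Set (M × M)) (x : M) : Set M := {y | (x, y) ∈ I}

/-- The chronological past of `y`: `I⁻(y) = {x | (x,y) ∈ I}`. -/
def chronPast {M : Type*} (I : Set (M × M)) (y : M) : Set M := {x | (x, y) ∈ I}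

/-- `D⁺_f = {(x,y) : y ∈ cl(I⁺(x))}`. -/
def Dfut {M : Type*} [TopologicalSpace M] (I : Set (M × M)) : Set (M × M) :=
  {p | p.2 ∈ closure (chronFuture I p.1)}

/-- `D⁺_p = {(x,y) : x ∈ cl(I⁻(y))}`. -/
def Dpast {M : Type*} [TopologicalSpace M] (I : Set (M × M)) : Set (M × M) :=
  {p | p.1 ∈ closure (chronPast I p.2)}

/-- `D⁺ = D⁺_f ∩ D⁺_p`. -/
def Dplus {M : Type*} [TopologicalSpace M] (I : Set (M × M)) : Set (M × M) :=
  Dfut I ∩ Dpast I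

/-! Since `J` pushes `I` forward and backward, `(x, y) ∈ J` already gives `I⁺(y) ⊆ I⁺(x)` and
`I⁻(x) ⊆ I⁻(y)`. As `I` is open, the chronological sets of a point are open, so by transitivity of
`I` the closure conditions `x ∈ cl I⁺(y)` and `y ∈ cl I⁻(x)` give the reverse inclusions; conversely
equal chronological sets give them because every point is in the closure of its own. -/

section ChronologicalSets

variable {M : Type*} [TopologicalSpace M] {I : Set (M × M)}

lemma isOpen_chronFuture (hI : IsOpen I) (x : M) : IsOpen (chronFuture I x) :=
  hI.preimage (Continuous.prodMk_right x)

lemma isOpen_chronPast (hI : IsOpen I) (y : M) : IsOpen (chronPast I y) :=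
  hI.preimage (Continuous.prodMk_left y)

lemma chronFuture_subset_of_mem_closure (hI : IsOpen I)
    (hItrans : ∀ x y z : M, (x, y) ∈ I → (y, z) ∈ I → (x, z) ∈ I) {x y : M}
    (h : x ∈ closure (chronFuture I y)) : chronFuture I x ⊆ chronFuture I y := fun z hz => by
  obtain ⟨w, hwz, hyw⟩ := mem_closure_iff.mp h _ (isOpen_chronPast hI z) hz
  exact hItrans y w z hyw hwz

lemma chronPast_subset_of_mem_closure (hI : IsOpen I)
    (hItrans : ∀ x y z : M, (x, y) ∈ I → (y, z) ∈ I → (x, z) ∈ I) {x y : M}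
    (h : y ∈ closure (chronPast I x)) : chronPast I y ⊆ chronPast I x := fun w hw => by
  obtain ⟨z, hwz, hzx⟩ := mem_closure_iff.mp h _ (isOpen_chronFuture hI w) hw
  exact hItrans w z x hwz hzx

lemma mem_closure_chronFuture_iff_eq (hI : IsOpen I)
    (hItrans : ∀ x y z : M, (x, y) ∈ I → (y, z) ∈ I → (x, z) ∈ I) {x y : M}
    (hx : x ∈ closure (chronFuture I x)) (hsub : chronFuture I y ⊆ chronFuture I x) :
    x ∈ closure (chronFuture I y) ↔ chronFuture I x = chronFuture I y :=
  ⟨fun h => (chronFuture_subset_of_mem_closure hI hItrans h).antisymm hsub,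
    fun h => h ▸ hx⟩

lemma mem_closure_chronPast_iff_eq (hI : IsOpen I)
    (hItrans : ∀ x y z : M, (x, y) ∈ I → (y, z) ∈ I → (x, z) ∈ I) {x y : M}
    (hy : y ∈ closure (chronPast I y)) (hsub : chronPast I x ⊆ chronPast I y) :
    y ∈ closure (chronPast I x) ↔ chronPast I x = chronPast I y :=
  ⟨fun h => hsub.antisymm (chronPast_subset_of_mem_closure hI hItrans h),
    fun h => h ▸ hy⟩

end ChronologicalSets

theorem feeble_dist_iff_general {M : Type*} [TopologicalSpace M] (I J : Set (M × M))
    (hIopen : IsOpen I)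
    (hItrans : ∀ x y z : M, (x, y) ∈ I → (y, z) ∈ I → (x, z) ∈ I)
    (hselfF : ∀ x : M, x ∈ closure (chronFuture I x))
    (hselfP : ∀ x : M, x ∈ closure (chronPast I x))
    (hPushUp : ∀ x y z : M, (x, y) ∈ I → (y, z) ∈ J → (x, z) ∈ I)
    (hPushDown : ∀ x y z : M, (x, y) ∈ J → (y, z) ∈ I → (x, z) ∈ I) :
    (∀ x y : M, (x, y) ∈ J → chronFuture I x = chronFuture I y →
      chronPast I x = chronPast I y → x = y) ↔
    (∀ x y : M, (x, y) ∈ J → (y, x) ∈ Dplus I → x = y) := by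
  have hDplus : ∀ x y, (x, y) ∈ J → ((y, x) ∈ Dplus I ↔
      chronFuture I x = chronFuture I y ∧ chronPast I x = chronPast I y) := fun x y hJ =>
    and_congr
      (mem_closure_chronFuture_iff_eq hIopen hItrans (hselfF x) fun z => hPushDown x y z hJ)
      (mem_closure_chronPast_iff_eq hIopen hItrans (hselfP y) fun w hw => hPushUp w x y hw hJ)
  refine forall₂_congr fun x y => imp_congr_right fun hJ => ?_
  rw [hDplus x y hJ, and_imp]

/-- the two formulations of feeble distinction are equivalent. -/
theorem feeble_dist_iff {M : Type*} [TopologicalSpace M] (I J : Set (M × M))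
    (hIopen : IsOpen I)
    (hItrans : ∀ x y z : M, (x, y) ∈ I → (y, z) ∈ I → (x, z) ∈ I)
    (hselfF : ∀ x : M, x ∈ closure (chronFuture I x))
    (hselfP : ∀ x : M, x ∈ closure (chronPast I x))
    (hJrefl : ∀ x : M, (x, x) ∈ J)
    (hJtrans : ∀ x y z : M, (x, y) ∈ J → (y, z) ∈ J → (x, z) ∈ J)
    (hIJ : I ⊆ J)
    (hPushUp : ∀ x y z : M, (x, y) ∈ I → (y, z) ∈ J → (x, z) ∈ I)
    (hPushDown : ∀ x y z : M, (x, y) ∈ J → (y, z) ∈ I → (x, z) ∈ I) :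
    (∀ x y : M, (x, y) ∈ J → chronFuture I x = chronFuture I y →
      chronPast I x = chronPast I y → x = y) ↔
    (∀ x y : M, (x, y) ∈ J → (y, x) ∈ Dplus I → x = y) :=
  feeble_dist_iff_general I J hIopen hItrans hselfF hselfP hPushUp hPushDown
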